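/- arXiv:1611.00665 — 7 statements merged into one kernel-verified Lean document; each statement's English description precedes it below -/
import Mathlib

section
/- Let f be a non-negative submodular function on subsets of a finite set, and let A, B be sets. If S is a random subset of A including each element of A independently with probability 1/2, and T is an independent random subset of B including each element of B independently with probability 1/2, then E[f(S ∪ T)] ≥ (1/4)·(f(∅) + f(A) + f(B) + f(A ∪ B)). -/
/-
Pairing each `S ⊆ A` with its complement `A \ S`, submodularity applied to `S ∪ C` and
`(A \ S) ∪ C` gives `f C + f (A ∪ C) ≤ f (S ∪ C) + f ((A \ S) ∪ C)`; averaging over `S` shows that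
a uniformly random `S ⊆ A` satisfies `E[f (S ∪ C)] ≥ (f C + f (A ∪ C)) / 2`. Applying this first to
`T ⊆ B` for fixed `S`, and then to `S ⊆ A` with `C = ∅` and `C = B`, yields the bound.
-/

open Finset

def Submodular {n : ℕ} (f : Finset (Fin n) → ℝ) : Prop :=
  ∀ S T : Finset (Fin n), f (S ∪ T) + f (S ∩ T) ≤ f S + f T

theorem Finset.sum_powerset_sdiff {α β : Type*} [DecidableEq α] [AddCommMonoid β]
    (A : Finset α) (g : Finset α → β) :
    ∑ S ∈ A.powerset, g (A \ S) = ∑ S ∈ A.powerset, g S :=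
  sum_nbij' (A \ ·) (A \ ·) (by simp) (by simp)
    (fun _ hS ↦ Finset.sdiff_sdiff_eq_self (mem_powerset.1 hS))
    (fun _ hS ↦ Finset.sdiff_sdiff_eq_self (mem_powerset.1 hS)) (fun _ _ ↦ rfl)

namespace Submodular

variable {n : ℕ} {f : Finset (Fin n) → ℝ}

theorem add_le_add_sdiff (hf : Submodular f) {A S : Finset (Fin n)} (hS : S ⊆ A)
    (C : Finset (Fin n)) :
    f C + f (A ∪ C) ≤ f (S ∪ C) + f ((A \ S) ∪ C) := by
  have hunion : (S ∪ C) ∪ ((A \ S) ∪ C) = A ∪ C := by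
    rw [union_union_union_comm, union_sdiff_of_subset hS, union_self]
  have hinter : (S ∪ C) ∩ ((A \ S) ∪ C) = C := by
    rw [← inter_union_distrib_right, inter_sdiff_self, empty_union]
  simpa [hunion, hinter, add_comm] using hf (S ∪ C) ((A \ S) ∪ C)

theorem add_div_two_le_sum_powerset (hf : Submodular f) (A C : Finset (Fin n)) :
    (f C + f (A ∪ C)) / 2 ≤ ∑ S ∈ A.powerset, (1 / 2 ^ A.card : ℝ) * f (S ∪ C) := by
  set w : ℝ := 1 / 2 ^ A.card
  have hw : 0 ≤ w := by positivity
  have htotal : ∑ _S ∈ A.powerset, w * (f C + f (A ∪ C)) = f C + f (A ∪ C) := by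
    rw [sum_const, card_powerset, nsmul_eq_mul]
    simp [w]
  have hpair : ∑ S ∈ A.powerset, w * (f C + f (A ∪ C)) ≤
      ∑ S ∈ A.powerset, (w * f (S ∪ C) + w * f ((A \ S) ∪ C)) :=
    sum_le_sum fun S hS ↦ by
      rw [← mul_add]
      exact mul_le_mul_of_nonneg_left (hf.add_le_add_sdiff (mem_powerset.1 hS) C) hw
  rw [sum_add_distrib, sum_powerset_sdiff A (fun S ↦ w * f (S ∪ C)), htotal] at hpair
  linarith

end Submodular

theorem stmt_3_general {n : ℕ} (f : Finset (Fin n) → ℝ) (hf : Submodular f)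
    (A B : Finset (Fin n)) :
    (1 / 4 : ℝ) * (f ∅ + f A + f B + f (A ∪ B)) ≤
      ∑ S ∈ A.powerset, ∑ T ∈ B.powerset,
        ((1 / 2 ^ A.card : ℝ) * (1 / 2 ^ B.card : ℝ)) * f (S ∪ T) := by
  set w : ℝ := 1 / 2 ^ A.card
  have hw : 0 ≤ w := by positivity
  have hinner : ∀ S ∈ A.powerset, w * ((f S + f (S ∪ B)) / 2) ≤
      ∑ T ∈ B.powerset, (w * (1 / 2 ^ B.card : ℝ)) * f (S ∪ T) := by
    intro S _
    have h := hf.add_div_two_le_sum_powerset B S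
    simp only [union_comm _ S] at h
    simpa only [mul_sum, mul_assoc] using mul_le_mul_of_nonneg_left h hw
  have hempty := hf.add_div_two_le_sum_powerset A ∅
  have hB := hf.add_div_two_le_sum_powerset A B
  simp only [union_empty] at hempty
  calc (1 / 4 : ℝ) * (f ∅ + f A + f B + f (A ∪ B))
      ≤ ((∑ S ∈ A.powerset, w * f S) + ∑ S ∈ A.powerset, w * f (S ∪ B)) / 2 := by linarith
    _ = ∑ S ∈ A.powerset, w * ((f S + f (S ∪ B)) / 2) := by
      rw [← sum_add_distrib, sum_div]
      exact sum_congr rfl fun _ _ ↦ by ring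
    _ ≤ _ := sum_le_sum hinner

theorem stmt_3 {n : ℕ} (f : Finset (Fin n) → ℝ) (hf : Submodular f)
    (hnonneg : ∀ S, 0 ≤ f S) (A B : Finset (Fin n)) :
    (1 / 4 : ℝ) * (f ∅ + f A + f B + f (A ∪ B)) ≤
      ∑ S ∈ A.powerset, ∑ T ∈ B.powerset,
        ((1 / 2 ^ A.card : ℝ) * (1 / 2 ^ B.card : ℝ)) * f (S ∪ T) :=
  stmt_3_general f hf A B
end

section
/- Let f be a non-negative submodular function on subsets of [n], let A ⊆ [n], and let p ∈ [0,1]. If R is a random subset of A including each element independently with probability p, then E[f(R)] ≥ p(1−p)·max_{T ⊆ A} f(T). -/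
/-!
Split `A` into `T` and `A \ T`. Adding the elements of `A` one at a time and using diminishing
returns, the expectation of a submodular `f` over a `p`-random subset of `X ∪ Y` (with `X`, `Y`
disjoint) dominates the mixture of `f ∅`, `f X`, `f Y`, `f (X ∪ Y)` with the weights `(1-p)²`,
`p(1-p)`, `(1-p)p`, `p²` of the events "`R` meets neither / only `X` / only `Y` / both".
Taking `X = T` and dropping the three non-negative terms other than `p(1-p) f T` gives the bound.
-/

open Finset

/-- `E[f R]` for `R ⊆ Y` containing each element of `Y` independently with probability `p`. -/
noncomputable def biasedExpect {α : Type*} (p : ℝ) (Y : Finset α) (f : Finset α → ℝ) : ℝ :=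
  ∑ S ∈ Y.powerset, p ^ S.card * (1 - p) ^ (Y.card - S.card) * f S

section BiasedExpect

variable {α : Type*} (p : ℝ) (f : Finset α → ℝ)

theorem biasedExpect_empty : biasedExpect p ∅ f = f ∅ := by
  simp [biasedExpect]

variable [DecidableEq α]

theorem biasedExpect_insert {a : α} {Y : Finset α} (ha : a ∉ Y) :
    biasedExpect p (insert a Y) f =
      (1 - p) * biasedExpect p Y f + p * biasedExpect p Y (fun S => f (insert a S)) := by
  rw [biasedExpect, sum_powerset_insert ha, biasedExpect, biasedExpect, mul_sum, mul_sum]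
  congr 1 <;> refine sum_congr rfl fun S hS => ?_
  all_goals
    have hSY : S ⊆ Y := mem_powerset.mp hS
    rw [card_insert_of_notMem ha]
  · rw [Nat.succ_sub (card_le_card hSY), pow_succ]
    ring
  · rw [card_insert_of_notMem (fun h => ha (hSY h)), Nat.succ_sub_succ, pow_succ]
    ring

end BiasedExpect

namespace Submodular

variable {n : ℕ} {f : Finset (Fin n) → ℝ}

theorem comp_insert (hf : Submodular f) (a : Fin n) :
    Submodular (fun S => f (insert a S)) := by
  intro S T
  simpa only [insert_union_distrib, insert_inter_distrib] using
    hf (insert a S) (insert a T)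

theorem insert_add_le (hf : Submodular f) {a : Fin n} {U S : Finset (Fin n)}
    (hUS : U ⊆ S) (ha : a ∉ S) :
    f (insert a S) + f U ≤ f S + f (insert a U) := by
  have hunion : insert a U ∪ S = insert a S := by
    rw [insert_union, union_eq_right.mpr hUS]
  have hinter : insert a U ∩ S = U := by
    rw [insert_inter_of_notMem ha, inter_eq_left.mpr hUS]
  have h := hf (insert a U) S
  rw [hunion, hinter] at h
  linarith

variable {p : ℝ}

theorem le_biasedExpect (hp0 : 0 ≤ p) (hp1 : p ≤ 1) (hf : Submodular f) (Y : Finset (Fin n)) :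
    (1 - p) * f ∅ + p * f Y ≤ biasedExpect p Y f := by
  induction Y using Finset.induction generalizing f with
  | empty => rw [biasedExpect_empty]; linarith
  | @insert a Y ha ih =>
    rw [biasedExpect_insert p f ha]
    have hq : 0 ≤ 1 - p := by linarith
    have h1 := mul_le_mul_of_nonneg_left (ih hf) hq
    have h2 := mul_le_mul_of_nonneg_left (ih (hf.comp_insert a)) hp0
    have h3 := mul_le_mul_of_nonneg_left (hf.insert_add_le (empty_subset Y) ha)
      (mul_nonneg hq hp0)
    linarith

theorem le_biasedExpect_union (hp0 : 0 ≤ p) (hp1 : p ≤ 1) (hf : Submodular f)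
    {X Y : Finset (Fin n)} (hXY : Disjoint X Y) :
    (1 - p) * (1 - p) * f ∅ + p * (1 - p) * f X + (1 - p) * p * f Y + p * p * f (X ∪ Y)
      ≤ biasedExpect p (X ∪ Y) f := by
  induction X using Finset.induction generalizing f with
  | empty =>
    have := le_biasedExpect hp0 hp1 hf Y
    rw [empty_union]
    linarith
  | @insert a X ha ih =>
    have haY : a ∉ Y := disjoint_left.mp hXY (mem_insert_self a X)
    have hXY' : Disjoint X Y := disjoint_of_subset_left (subset_insert a X) hXY
    have haXY : a ∉ X ∪ Y := by simp [ha, haY]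
    rw [insert_union, biasedExpect_insert p f haXY]
    have hq : 0 ≤ 1 - p := by linarith
    have h1 := mul_le_mul_of_nonneg_left (ih hf hXY') hq
    have h2 := mul_le_mul_of_nonneg_left (ih (hf.comp_insert a) hXY') hp0
    have h3 := mul_le_mul_of_nonneg_left (hf.insert_add_le (empty_subset X) ha)
      (mul_nonneg (mul_nonneg hq hq) hp0)
    have h4 := mul_le_mul_of_nonneg_left (hf.insert_add_le subset_union_right haXY)
      (mul_nonneg (mul_nonneg hq hp0) hp0)
    linarith

end Submodular

theorem stmt_4 {n : ℕ} (f : Finset (Fin n) → ℝ) (hf : Submodular f)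
    (hnonneg : ∀ S, 0 ≤ f S) (A : Finset (Fin n)) (p : ℝ)
    (hp0 : 0 ≤ p) (hp1 : p ≤ 1) (T : Finset (Fin n)) (hT : T ⊆ A) :
    p * (1 - p) * f T ≤
      ∑ R ∈ A.powerset, p ^ R.card * (1 - p) ^ (A.card - R.card) * f R := by
  have h := hf.le_biasedExpect_union hp0 hp1 (disjoint_sdiff (s := T) (t := A))
  rw [union_sdiff_of_subset hT] at h
  have hq : 0 ≤ 1 - p := by linarith
  have := mul_nonneg (mul_nonneg hq hq) (hnonneg ∅)
  have := mul_nonneg (mul_nonneg hq hp0) (hnonneg (A \ T))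
  have := mul_nonneg (mul_nonneg hp0 hp0) (hnonneg A)
  exact le_trans (by linarith) h
end

section
/- Let f be a non-negative submodular function on subsets of [n] with maximizer S*, and let 0 ≤ L ≤ H ≤ 1. Let x ∈ [0,1]^n be a vector with L ≤ x_i ≤ H for all i. Then the multilinear extension satisfies F(x) ≥ L(1−H)·f(S*). -/
/-!
Split a random set `S ∼ x` as `A ∪ B` with `A ⊆ S*` and `B ⊆ S*ᶜ`. The multilinear extension of a
submodular function is concave along nonnegative directions. Along the segment from
`(x - L)/(1 - L)` to `1` this gives `E[f(A ∪ B)] ≥ L f(S* ∪ B)` for every fixed `B`, and along the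
segment from `0` to `x / H` it gives `E[f(S* ∪ B)] ≥ (1 - H) f(S*)`; the discarded terms are
nonnegative.
-/

open Finset

noncomputable def multilinear {n : ℕ} (f : Finset (Fin n) → ℝ) (x : Fin n → ℝ) : ℝ :=
  ∑ S : Finset (Fin n), (∏ i ∈ S, x i) * (∏ i ∈ Sᶜ, (1 - x i)) * f S

noncomputable def multilinearOn {α : Type*} [DecidableEq α] (D : Finset α) (x : α → ℝ)
    (g : Finset α → ℝ) : ℝ :=
  ∑ A ∈ D.powerset, (∏ i ∈ A, x i) * (∏ i ∈ D \ A, (1 - x i)) * g A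

section MultilinearOn

variable {α : Type*} [DecidableEq α] {D : Finset α} {x : α → ℝ}

@[simp]
theorem multilinearOn_empty (x : α → ℝ) (g : Finset α → ℝ) : multilinearOn ∅ x g = g ∅ := by
  simp [multilinearOn]

theorem multilinearOn_insert {u : α} (hu : u ∉ D) (x : α → ℝ) (g : Finset α → ℝ) :
    multilinearOn (insert u D) x g =
      (1 - x u) * multilinearOn D x g + x u * multilinearOn D x (fun A => g (insert u A)) := by
  rw [multilinearOn, sum_powerset_insert hu, multilinearOn, multilinearOn, mul_sum, mul_sum]
  congr 1 <;> refine sum_congr rfl fun A hA => ?_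
  · have huA : u ∉ A := fun h => hu (mem_powerset.mp hA h)
    rw [insert_sdiff_of_notMem _ huA, prod_insert (fun h => hu (mem_sdiff.mp h).1)]
    ring
  · have huA : u ∉ A := fun h => hu (mem_powerset.mp hA h)
    rw [insert_sdiff_insert, sdiff_insert_of_notMem hu, prod_insert huA]
    ring

theorem multilinearOn_union {D₁ D₂ : Finset α} (h : Disjoint D₁ D₂) (x : α → ℝ)
    (g : Finset α → ℝ) :
    multilinearOn (D₁ ∪ D₂) x g =
      multilinearOn D₂ x (fun B => multilinearOn D₁ x (fun A => g (A ∪ B))) := by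
  induction D₂ using Finset.induction_on generalizing g with
  | empty => simp
  | @insert u D₂ hu ih =>
    obtain ⟨huD₁, hD₁D₂⟩ := disjoint_insert_right.mp h
    rw [union_insert, multilinearOn_insert (by simp [huD₁, hu]), ih hD₁D₂, ih hD₁D₂,
      multilinearOn_insert hu]
    simp only [union_insert]

theorem multilinearOn_congr {y : α → ℝ} (hxy : ∀ i ∈ D, x i = y i) (g : Finset α → ℝ) :
    multilinearOn D x g = multilinearOn D y g := by
  refine sum_congr rfl fun A hA => ?_
  have hA := mem_powerset.mp hA
  rw [prod_congr rfl fun i hi => hxy i (hA hi),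
    prod_congr rfl fun i hi => congrArg (1 - ·) (hxy i (mem_sdiff.mp hi).1)]

theorem multilinearOn_const_mul (c : ℝ) (g : Finset α → ℝ) :
    multilinearOn D x (fun A => c * g A) = c * multilinearOn D x g := by
  rw [multilinearOn, multilinearOn, mul_sum]
  exact sum_congr rfl fun A _ => by ring

theorem multilinearOn_sub (g h : Finset α → ℝ) :
    multilinearOn D x (fun A => g A - h A) = multilinearOn D x g - multilinearOn D x h := by
  rw [multilinearOn, multilinearOn, multilinearOn, ← sum_sub_distrib]
  exact sum_congr rfl fun A _ => by ring

theorem multilinearOn_zero (D : Finset α) (g : Finset α → ℝ) :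
    multilinearOn D 0 g = g ∅ := by
  induction D using Finset.induction_on generalizing g with
  | empty => simp
  | @insert u D hu ih => simp [multilinearOn_insert hu, ih]

theorem multilinearOn_one (D : Finset α) (g : Finset α → ℝ) :
    multilinearOn D 1 g = g D := by
  induction D using Finset.induction_on generalizing g with
  | empty => simp
  | @insert u D hu ih => simp [multilinearOn_insert hu, ih]

theorem multilinearOn_mono (hx : ∀ i ∈ D, x i ∈ Set.Icc 0 1) {g h : Finset α → ℝ}
    (hgh : ∀ A ⊆ D, g A ≤ h A) :
    multilinearOn D x g ≤ multilinearOn D x h := by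
  refine sum_le_sum fun A hA => mul_le_mul_of_nonneg_left (hgh A (mem_powerset.mp hA)) ?_
  refine mul_nonneg (prod_nonneg fun i hi => (hx i (mem_powerset.mp hA hi)).1)
    (prod_nonneg fun i hi => ?_)
  linarith [(hx i (mem_sdiff.mp hi).1).2]

theorem multilinearOn_nonneg (hx : ∀ i ∈ D, x i ∈ Set.Icc 0 1) {g : Finset α → ℝ}
    (hg : ∀ A, 0 ≤ g A) :
    0 ≤ multilinearOn D x g := by
  have h := multilinearOn_mono hx (g := fun A => 0 * g A) fun A _ => by simpa using hg A
  rwa [multilinearOn_const_mul, zero_mul] at h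

theorem multilinearOn_le_of_antitoneOn {w z : α → ℝ} (hw : ∀ i ∈ D, 0 ≤ w i)
    (hwz : ∀ i ∈ D, w i ≤ z i) (hz : ∀ i ∈ D, z i ≤ 1) {h : Finset α → ℝ}
    (hh : AntitoneOn h (Set.Iic D)) :
    multilinearOn D z h ≤ multilinearOn D w h := by
  induction D using Finset.induction_on generalizing h with
  | empty => simp
  | @insert u D hu ih =>
    have hwu := hw u (mem_insert_self u D)
    have hwzu := hwz u (mem_insert_self u D)
    have hzu := hz u (mem_insert_self u D)
    have hw' : ∀ i ∈ D, 0 ≤ w i := fun i hi => hw i (mem_insert_of_mem hi)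
    have hwz' : ∀ i ∈ D, w i ≤ z i := fun i hi => hwz i (mem_insert_of_mem hi)
    have hz' : ∀ i ∈ D, z i ≤ 1 := fun i hi => hz i (mem_insert_of_mem hi)
    have hsub : ∀ {A : Finset α}, A ∈ Set.Iic D → A ∈ Set.Iic (insert u D) :=
      fun hA => hA.trans (subset_insert u D)
    have hins : ∀ {A : Finset α}, A ∈ Set.Iic D → insert u A ∈ Set.Iic (insert u D) :=
      fun hA => insert_subset_insert u hA
    have ih₀ := ih hw' hwz' hz' (hh.mono fun _ => hsub)
    have ih₁ := ih hw' hwz' hz' (h := fun A => h (insert u A))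
      fun A hA B hB hAB => hh (hins hA) (hins hB) (insert_subset_insert u hAB)
    have hw₁ : multilinearOn D w (fun A => h (insert u A)) ≤ multilinearOn D w h :=
      multilinearOn_mono (fun i hi => ⟨hw' i hi, (hwz' i hi).trans (hz' i hi)⟩)
        fun A hA => hh (hsub hA) (hins hA) (subset_insert u A)
    rw [multilinearOn_insert hu, multilinearOn_insert hu]
    linarith [mul_le_mul_of_nonneg_left ih₀ (sub_nonneg.mpr hzu),
      mul_le_mul_of_nonneg_left ih₁ (hwu.trans hwzu),
      mul_le_mul_of_nonneg_left hw₁ (sub_nonneg.mpr hwzu)]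

end MultilinearOn

theorem multilinear_eq_multilinearOn_univ {n : ℕ} (f : Finset (Fin n) → ℝ) (x : Fin n → ℝ) :
    multilinear f x = multilinearOn univ x f := by
  rw [multilinear, multilinearOn, powerset_univ]
  exact sum_congr rfl fun S _ => by rw [compl_eq_univ_sdiff]

namespace Submodular

variable {n : ℕ} {g : Finset (Fin n) → ℝ}

theorem comp_union_left (hg : Submodular g) (C : Finset (Fin n)) :
    Submodular (fun A => g (C ∪ A)) := fun S T => by
  have h := hg (C ∪ S) (C ∪ T)
  rwa [← union_union_distrib_left, ← union_inter_distrib_left] at h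

theorem comp_union_right (hg : Submodular g) (C : Finset (Fin n)) :
    Submodular (fun A => g (A ∪ C)) := by
  simpa only [union_comm _ C] using hg.comp_union_left C

theorem comp_insert_s5 (hg : Submodular g) (u : Fin n) : Submodular (fun A => g (insert u A)) := by
  simpa only [insert_eq] using hg.comp_union_left {u}

theorem antitoneOn_insert_sub (hg : Submodular g) {u : Fin n} {D : Finset (Fin n)} (hu : u ∉ D) :
    AntitoneOn (fun A => g (insert u A) - g A) (Set.Iic D) := by
  intro A _ B hB hAB
  have huB : u ∉ B := fun h => hu (hB h)
  have h := hg (insert u A) B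
  rw [insert_union, union_eq_right.mpr hAB, insert_inter_of_notMem huB,
    inter_eq_left.mpr hAB] at h
  simp only
  linarith

theorem multilinearOn_concave (hg : Submodular g) {D : Finset (Fin n)} {w z : Fin n → ℝ}
    (hw : ∀ i ∈ D, 0 ≤ w i) (hwz : ∀ i ∈ D, w i ≤ z i) (hz : ∀ i ∈ D, z i ≤ 1)
    {p : ℝ} (hp₀ : 0 ≤ p) (hp₁ : p ≤ 1) :
    (1 - p) * multilinearOn D w g + p * multilinearOn D z g ≤
      multilinearOn D (fun i => (1 - p) * w i + p * z i) g := by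
  induction D using Finset.induction_on generalizing g with
  | empty => exact le_of_eq (by simp only [multilinearOn_empty]; ring)
  | @insert u D hu ih =>
    have hwu := hw u (mem_insert_self u D)
    have hwzu := hwz u (mem_insert_self u D)
    have hzu := hz u (mem_insert_self u D)
    have hw' : ∀ i ∈ D, 0 ≤ w i := fun i hi => hw i (mem_insert_of_mem hi)
    have hwz' : ∀ i ∈ D, w i ≤ z i := fun i hi => hwz i (mem_insert_of_mem hi)
    have hz' : ∀ i ∈ D, z i ≤ 1 := fun i hi => hz i (mem_insert_of_mem hi)
    have ih₀ := ih hg hw' hwz' hz'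
    have ih₁ := ih (hg.comp_insert_s5 u) hw' hwz' hz'
    -- The defect of concavity is `p (1 - p) (z u - w u)` times the drop of the expected marginal
    -- gain of `u` from `w` to `z`; the gain is antitone by submodularity.
    have hgain := multilinearOn_le_of_antitoneOn hw' hwz' hz' (hg.antitoneOn_insert_sub hu)
    rw [multilinearOn_sub, multilinearOn_sub] at hgain
    rw [multilinearOn_insert hu, multilinearOn_insert hu, multilinearOn_insert hu]
    have hm₀ : 0 ≤ (1 - p) * w u + p * z u := by nlinarith
    have hm₁ : 0 ≤ 1 - ((1 - p) * w u + p * z u) := by nlinarith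
    have hc : 0 ≤ p * (1 - p) * (z u - w u) :=
      mul_nonneg (mul_nonneg hp₀ (sub_nonneg.mpr hp₁)) (sub_nonneg.mpr hwzu)
    linarith [mul_le_mul_of_nonneg_left ih₀ hm₁, mul_le_mul_of_nonneg_left ih₁ hm₀,
      mul_le_mul_of_nonneg_left hgain hc]

theorem one_sub_mul_le_multilinearOn (hg : Submodular g) (hg₀ : ∀ A, 0 ≤ g A)
    {D : Finset (Fin n)} {x : Fin n → ℝ} {H : ℝ} (hH₀ : 0 ≤ H) (hH₁ : H ≤ 1)
    (hx : ∀ i ∈ D, x i ∈ Set.Icc 0 H) :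
    (1 - H) * g ∅ ≤ multilinearOn D x g := by
  have hy : ∀ i ∈ D, x i / H ∈ Set.Icc 0 1 :=
    fun i hi => ⟨div_nonneg (hx i hi).1 hH₀, div_le_one_of_le₀ (hx i hi).2 hH₀⟩
  have hconc := hg.multilinearOn_concave (D := D) (w := 0) (z := fun i => x i / H)
    (fun _ _ => le_rfl) (fun i hi => (hy i hi).1) (fun i hi => (hy i hi).2) hH₀ hH₁
  have hpoint : ∀ i ∈ D, (1 - H) * (0 : Fin n → ℝ) i + H * (x i / H) = x i := fun i hi => by
    simpa using mul_div_cancel_of_imp' fun hH => le_antisymm (hH ▸ (hx i hi).2) (hx i hi).1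
  rw [multilinearOn_zero, multilinearOn_congr hpoint] at hconc
  have hrest := multilinearOn_nonneg (x := fun i => x i / H) hy hg₀
  linarith [mul_nonneg hH₀ hrest]

theorem mul_le_multilinearOn (hg : Submodular g) (hg₀ : ∀ A, 0 ≤ g A)
    {D : Finset (Fin n)} {x : Fin n → ℝ} {L : ℝ} (hL₀ : 0 ≤ L) (hL₁ : L ≤ 1)
    (hx : ∀ i ∈ D, x i ∈ Set.Icc L 1) :
    L * g D ≤ multilinearOn D x g := by
  have hy : ∀ i ∈ D, (x i - L) / (1 - L) ∈ Set.Icc 0 1 := fun i hi =>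
    ⟨div_nonneg (sub_nonneg.mpr (hx i hi).1) (sub_nonneg.mpr hL₁),
      div_le_one_of_le₀ (by linarith [(hx i hi).2]) (sub_nonneg.mpr hL₁)⟩
  have hconc := hg.multilinearOn_concave (D := D) (w := fun i => (x i - L) / (1 - L)) (z := 1)
    (fun i hi => (hy i hi).1) (fun i hi => (hy i hi).2) (fun _ _ => le_rfl) hL₀ hL₁
  have hpoint : ∀ i ∈ D, (1 - L) * ((x i - L) / (1 - L)) + L * (1 : Fin n → ℝ) i = x i :=
    fun i hi => by
      rw [mul_div_cancel_of_imp' fun hL => by linarith [(hx i hi).1, (hx i hi).2], Pi.one_apply]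
      ring
  rw [multilinearOn_one, multilinearOn_congr hpoint] at hconc
  have hrest := multilinearOn_nonneg (x := fun i => (x i - L) / (1 - L)) hy hg₀
  linarith [mul_nonneg (sub_nonneg.mpr hL₁) hrest]

end Submodular

theorem stmt_5_general {n : ℕ} (f : Finset (Fin n) → ℝ) (hf : Submodular f)
    (hnonneg : ∀ S, 0 ≤ f S) (Sstar : Finset (Fin n))
    (L H : ℝ) (hL : 0 ≤ L) (hLH : L ≤ H) (hH : H ≤ 1)
    (x : Fin n → ℝ) (hx : ∀ i, L ≤ x i ∧ x i ≤ H) :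
    L * (1 - H) * f Sstar ≤ multilinear f x := by
  have hH₀ : 0 ≤ H := hL.trans hLH
  have hx₀₁ : ∀ i ∈ Sstarᶜ, x i ∈ Set.Icc 0 1 := fun i _ => ⟨hL.trans (hx i).1, (hx i).2.trans hH⟩
  have hinner (B : Finset (Fin n)) :
      L * f (Sstar ∪ B) ≤ multilinearOn Sstar x (fun A => f (A ∪ B)) :=
    (hf.comp_union_right B).mul_le_multilinearOn (fun _ => hnonneg _) hL (hLH.trans hH)
      fun i _ => ⟨(hx i).1, (hx i).2.trans hH⟩
  have houter : (1 - H) * f Sstar ≤ multilinearOn Sstarᶜ x (fun B => f (Sstar ∪ B)) := by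
    simpa using (hf.comp_union_left Sstar).one_sub_mul_le_multilinearOn (fun _ => hnonneg _)
      hH₀ hH fun i _ => ⟨hL.trans (hx i).1, (hx i).2⟩
  calc L * (1 - H) * f Sstar = L * ((1 - H) * f Sstar) := mul_assoc _ _ _
    _ ≤ L * multilinearOn Sstarᶜ x (fun B => f (Sstar ∪ B)) := by gcongr
    _ = multilinearOn Sstarᶜ x (fun B => L * f (Sstar ∪ B)) := (multilinearOn_const_mul _ _).symm
    _ ≤ multilinearOn Sstarᶜ x (fun B => multilinearOn Sstar x (fun A => f (A ∪ B))) :=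
      multilinearOn_mono hx₀₁ fun B _ => hinner B
    _ = multilinear f x := by
      rw [← multilinearOn_union disjoint_compl_right, union_compl,
        multilinear_eq_multilinearOn_univ]

theorem stmt_5 {n : ℕ} (f : Finset (Fin n) → ℝ) (hf : Submodular f)
    (hnonneg : ∀ S, 0 ≤ f S) (Sstar : Finset (Fin n))
    (hSstar : ∀ T, f T ≤ f Sstar)
    (L H : ℝ) (hL : 0 ≤ L) (hLH : L ≤ H) (hH : H ≤ 1)
    (x : Fin n → ℝ) (hx : ∀ i, L ≤ x i ∧ x i ≤ H) :
    L * (1 - H) * f Sstar ≤ multilinear f x :=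
  stmt_5_general f hf hnonneg Sstar L H hL hLH hH x hx
end

section
/- Let f be a non-negative submodular function on subsets of [n], and fix sets S, T ⊆ [n]. If T_{1/2} is a random subset of T including each element of T independently with probability 1/2, then E[f((S \ T) ∪ T_{1/2})] ≥ (1/4)·f(S). -/
open Finset

/-!
Write `E[g]` for the average of `g T'` over `T' ⊆ T`. Averaging is invariant under the
translation `T' ↦ T' ∆ A` for any `A ⊆ T`. Taking `A = T \ S`, the sets `S ∪ T'` and
`S ∪ (T' ∆ A)` meet exactly in `S`, so submodularity and `f ≥ 0` give
`f S ≤ 2 E[f (S ∪ T')]`. Taking `A = S ∩ T`, the sets `(S \ T) ∪ T'` and `(S \ T) ∪ (T' ∆ A)`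
have union `S ∪ T'`, which gives `E[f (S ∪ T')] ≤ 2 E[f ((S \ T) ∪ T')]`.
-/

namespace Submodular

variable {n : ℕ} {f : Finset (Fin n) → ℝ}

theorem apply_union_le_add (hf : Submodular f) (hnonneg : ∀ S, 0 ≤ f S) (A B : Finset (Fin n)) :
    f (A ∪ B) ≤ f A + f B := by
  linarith [hf A B, hnonneg (A ∩ B)]

theorem apply_inter_le_add (hf : Submodular f) (hnonneg : ∀ S, 0 ≤ f S) (A B : Finset (Fin n)) :
    f (A ∩ B) ≤ f A + f B := by
  linarith [hf A B, hnonneg (A ∪ B)]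

end Submodular

namespace Finset

variable {α : Type*} [DecidableEq α]

theorem sum_powerset_symmDiff {M : Type*} [AddCommMonoid M] {T A : Finset α} (hA : A ⊆ T)
    (F : Finset α → M) :
    ∑ T' ∈ T.powerset, F (symmDiff T' A) = ∑ T' ∈ T.powerset, F T' := by
  have hmaps : ∀ T' ∈ T.powerset, symmDiff T' A ∈ T.powerset := fun T' hT' =>
    mem_powerset.2 (symmDiff_le_sup.trans (sup_le (mem_powerset.1 hT') hA))
  exact sum_nbij' (symmDiff · A) (symmDiff · A) hmaps hmaps
    (fun _ _ => symmDiff_symmDiff_cancel_right A _)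
    (fun _ _ => symmDiff_symmDiff_cancel_right A _) (fun _ _ => rfl)

theorem sum_powerset_le_two_nsmul_of_le_add_symmDiff {M : Type*} [AddCommMonoid M]
    [PartialOrder M] [IsOrderedAddMonoid M] {T A : Finset α} (hA : A ⊆ T)
    {g h : Finset α → M} (hle : ∀ T' ⊆ T, g T' ≤ h T' + h (symmDiff T' A)) :
    ∑ T' ∈ T.powerset, g T' ≤ 2 • ∑ T' ∈ T.powerset, h T' :=
  calc ∑ T' ∈ T.powerset, g T'
      ≤ ∑ T' ∈ T.powerset, (h T' + h (symmDiff T' A)) :=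
        sum_le_sum fun T' hT' => hle T' (mem_powerset.1 hT')
    _ = 2 • ∑ T' ∈ T.powerset, h T' := by
        rw [sum_add_distrib, sum_powerset_symmDiff hA, two_nsmul]

variable {S T T' : Finset α}

theorem sdiff_union_union_sdiff_union_symmDiff_inter (hT' : T' ⊆ T) :
    (S \ T ∪ T') ∪ (S \ T ∪ symmDiff T' (S ∩ T)) = S ∪ T' := by
  ext x
  have := @hT' x
  simp only [mem_union, mem_sdiff, mem_symmDiff, mem_inter]
  tauto

theorem union_inter_union_symmDiff_sdiff (hT' : T' ⊆ T) :
    (S ∪ T') ∩ (S ∪ symmDiff T' (T \ S)) = S := by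
  ext x
  have := @hT' x
  simp only [mem_union, mem_inter, mem_symmDiff, mem_sdiff]
  tauto

end Finset

theorem stmt_9 {n : ℕ} (f : Finset (Fin n) → ℝ) (hf : Submodular f)
    (hnonneg : ∀ S, 0 ≤ f S) (S T : Finset (Fin n)) :
    (1 / 4 : ℝ) * f S ≤
      ∑ T' ∈ T.powerset, (1 / 2 ^ T.card : ℝ) * f ((S \ T) ∪ T') := by
  have hlower : ∑ _T' ∈ T.powerset, f S ≤ 2 • ∑ T' ∈ T.powerset, f (S ∪ T') :=
    sum_powerset_le_two_nsmul_of_le_add_symmDiff sdiff_subset fun T' hT' => by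
      simpa only [union_inter_union_symmDiff_sdiff hT'] using
        hf.apply_inter_le_add hnonneg (S ∪ T') (S ∪ symmDiff T' (T \ S))
  have hupper : ∑ T' ∈ T.powerset, f (S ∪ T') ≤ 2 • ∑ T' ∈ T.powerset, f (S \ T ∪ T') :=
    sum_powerset_le_two_nsmul_of_le_add_symmDiff inter_subset_right fun T' hT' => by
      simpa only [sdiff_union_union_sdiff_union_symmDiff_inter hT'] using
        hf.apply_union_le_add hnonneg (S \ T ∪ T') (S \ T ∪ symmDiff T' (S ∩ T))
  rw [sum_const, card_powerset] at hlower
  simp only [nsmul_eq_mul, Nat.cast_pow, Nat.cast_ofNat] at hlower hupper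
  rw [← mul_sum]
  field_simp
  linarith
end

section
/- For any non-negative set function f on subsets of [n] and any x ∈ [0,1]^n, the multilinear extension F satisfies F(x/2) ≤ F_max(x), where F_max is the multilinear extension of f_max(S) = max_{T ⊆ S} f(T). -/
open Finset

noncomputable def fmax {n : ℕ} (f : Finset (Fin n) → ℝ) (S : Finset (Fin n)) : ℝ :=
  S.powerset.sup' ⟨∅, by simp⟩ f

/-!
Sampling `T ∼ p·x` is the same as first sampling `S ∼ x` and then keeping each element of `S`
independently with probability `p i`. Conditionally on `S`, the expectation of `f T` is a convex
combination of the values `f T`, `T ⊆ S`, hence at most `fmax f S`. With `p ≡ 1/2` this gives the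
theorem.
-/

section SubsetProb

variable {α : Type*} [DecidableEq α]

/-- For `T ⊆ U`: the probability that keeping each `i ∈ U` independently with probability `p i`
yields `T`. -/
def subsetProb (p : α → ℝ) (U T : Finset α) : ℝ :=
  (∏ i ∈ T, p i) * ∏ i ∈ U \ T, (1 - p i)

lemma subsetProb_nonneg {p : α → ℝ} (hp : ∀ i, 0 ≤ p i ∧ p i ≤ 1) (U T : Finset α) :
    0 ≤ subsetProb p U T :=
  mul_nonneg (prod_nonneg fun i _ => (hp i).1) (prod_nonneg fun i _ => sub_nonneg.2 (hp i).2)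

lemma sum_powerset_subsetProb (p : α → ℝ) (U : Finset α) :
    ∑ T ∈ U.powerset, subsetProb p U T = 1 := by
  simp only [subsetProb, ← prod_add, add_sub_cancel, prod_const_one]

lemma subsetProb_univ_mul [Fintype α] (p x : α → ℝ) (T : Finset α) :
    subsetProb (fun i => p i * x i) univ T =
      ∑ S with T ⊆ S, subsetProb x univ S * subsetProb p S T := by
  have expand : ∀ i, 1 - p i * x i = (1 - p i) * x i + (1 - x i) := fun i => by ring
  have disj : ∀ U ∈ (univ \ T).powerset, Disjoint T U := fun U hU =>
    disjoint_of_subset_right (mem_powerset.1 hU) disjoint_sdiff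
  rw [subsetProb, prod_congr rfl fun i _ => expand i, prod_add, mul_sum]
  refine sum_nbij' (T ∪ ·) (· \ T) (fun U _ => mem_filter.2 ⟨mem_univ _, subset_union_left⟩)
    (fun S _ => mem_powerset.2 (subset_sdiff.2 ⟨subset_univ _, sdiff_disjoint⟩))
    (fun U hU => union_sdiff_cancel_left (disj U hU))
    (fun S hS => union_sdiff_of_subset (mem_filter.1 hS).2) fun U hU => ?_
  rw [subsetProb, subsetProb, union_sdiff_cancel_left (disj U hU), sdiff_sdiff_left, sup_eq_union,
    prod_union (disj U hU), prod_mul_distrib, prod_mul_distrib]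
  ring

end SubsetProb

lemma multilinear_eq_sum_subsetProb {n : ℕ} (f : Finset (Fin n) → ℝ) (x : Fin n → ℝ) :
    multilinear f x = ∑ S, subsetProb x univ S * f S := by
  simp only [multilinear, subsetProb, compl_eq_univ_sdiff]

lemma sum_powerset_subsetProb_mul_le_fmax {n : ℕ} (f : Finset (Fin n) → ℝ) {p : Fin n → ℝ}
    (hp : ∀ i, 0 ≤ p i ∧ p i ≤ 1) (S : Finset (Fin n)) :
    ∑ T ∈ S.powerset, subsetProb p S T * f T ≤ fmax f S :=
  calc ∑ T ∈ S.powerset, subsetProb p S T * f T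
      ≤ ∑ T ∈ S.powerset, subsetProb p S T * fmax f S :=
        sum_le_sum fun T hT => mul_le_mul_of_nonneg_left (le_sup' f hT) (subsetProb_nonneg hp S T)
    _ = fmax f S := by rw [← sum_mul, sum_powerset_subsetProb, one_mul]

theorem multilinear_mul_le_multilinear_fmax {n : ℕ} (f : Finset (Fin n) → ℝ) {p x : Fin n → ℝ}
    (hp : ∀ i, 0 ≤ p i ∧ p i ≤ 1) (hx : ∀ i, 0 ≤ x i ∧ x i ≤ 1) :
    multilinear f (fun i => p i * x i) ≤ multilinear (fmax f) x := by
  simp only [multilinear_eq_sum_subsetProb]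
  calc ∑ T, subsetProb (fun i => p i * x i) univ T * f T
      = ∑ T, ∑ S with T ⊆ S, subsetProb x univ S * (subsetProb p S T * f T) := by
        simp only [subsetProb_univ_mul, sum_mul, mul_assoc]
    _ = ∑ S, subsetProb x univ S * ∑ T ∈ S.powerset, subsetProb p S T * f T := by
        simp only [mul_sum]
        exact sum_comm' fun T S => by simp
    _ ≤ ∑ S, subsetProb x univ S * fmax f S :=
        sum_le_sum fun S _ => mul_le_mul_of_nonneg_left
          (sum_powerset_subsetProb_mul_le_fmax f hp S) (subsetProb_nonneg hx univ S)

theorem stmt_11_general {n : ℕ} (f : Finset (Fin n) → ℝ)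
    (x : Fin n → ℝ) (hx : ∀ i, 0 ≤ x i ∧ x i ≤ 1) :
    multilinear f (fun i => x i / 2) ≤ multilinear (fmax f) x := by
  have half : ∀ _ : Fin n, (0 : ℝ) ≤ 1 / 2 ∧ (1 : ℝ) / 2 ≤ 1 := fun _ => by norm_num
  simpa only [one_div_mul_eq_div] using multilinear_mul_le_multilinear_fmax f half hx

theorem stmt_11 {n : ℕ} (f : Finset (Fin n) → ℝ) (hnonneg : ∀ S, 0 ≤ f S)
    (x : Fin n → ℝ) (hx : ∀ i, 0 ≤ x i ∧ x i ≤ 1) :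
    multilinear f (fun i => x i / 2) ≤ multilinear (fmax f) x :=
  stmt_11_general f x hx
end

section
/- For any non-negative submodular function f on subsets of [n] and any x ∈ [0,1]^n, f*_{1/2}(x) ≤ 50·F(x/2), where F is the multilinear extension of f and f*_{1/2}(x) = min_{S ⊆ [n]} E_{T ∼ 1_S/2}[f(T) + ∑_{i ∉ S} (f(T ∪ {i}) − f(T))·x_i]. -/
/-!
Draw `S` with each `i` independently with probability `x i`, and then `T` uniformly inside `S`.
Bounding the minimum over `S` by this average, `T` is distributed as a set drawn with marginals
`x / 2` (each `i ∉ T` lies in `S \ T` with weight `x i / 2` or outside `S` with weight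
`1 - x i`, adding up to `1 - x i / 2`). Replacing the marginal gains over `i ∉ S` by their
positive parts over `i ∉ T`, the bound depends on `T` alone and becomes
`F(x/2) + E_T[∑_{i ∉ T} x_i (f(T + i) - f(T))⁺]`. Shifting `T ↦ T + i` turns the second term into
at most `2 E_T[∑_{i ∈ T} (f(T) - f(T - i))⁺]`, and by submodularity and `f ≥ 0` the positive
decrements at `T` add up to at most `f(T)`. Hence `f*_{1/2}(x) ≤ 3 F(x/2)`.
-/

open Finset

noncomputable def fstarHalf {n : ℕ} (f : Finset (Fin n) → ℝ) (x : Fin n → ℝ) : ℝ :=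
  (Finset.univ : Finset (Finset (Fin n))).inf' ⟨∅, Finset.mem_univ _⟩
    (fun S => ∑ T ∈ S.powerset, (1 / 2 ^ S.card : ℝ) *
      (f T + ∑ i ∈ Sᶜ, (f (insert i T) - f T) * x i))

theorem Finset.inf'_le_sum_mul_of_sum_eq_one {ι : Type*} {s : Finset ι} (hs : s.Nonempty)
    (g w : ι → ℝ) (hw : ∀ i ∈ s, 0 ≤ w i) (hw1 : ∑ i ∈ s, w i = 1) :
    s.inf' hs g ≤ ∑ i ∈ s, w i * g i :=
  calc s.inf' hs g = ∑ i ∈ s, w i * s.inf' hs g := by rw [← sum_mul, hw1, one_mul]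
    _ ≤ ∑ i ∈ s, w i * g i :=
      sum_le_sum fun i hi => mul_le_mul_of_nonneg_left (inf'_le g hi) (hw i hi)

section ProductWeight

variable {α : Type*} [Fintype α] [DecidableEq α]

/-- The probability of `S` under the product distribution with marginals `y`. -/
def productWeight (y : α → ℝ) (S : Finset α) : ℝ :=
  (∏ i ∈ S, y i) * ∏ i ∈ Sᶜ, (1 - y i)

theorem productWeight_nonneg {y : α → ℝ} (hy : ∀ i, 0 ≤ y i ∧ y i ≤ 1) (S : Finset α) :
    0 ≤ productWeight y S :=
  mul_nonneg (prod_nonneg fun i _ => (hy i).1)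
    (prod_nonneg fun i _ => sub_nonneg.2 (hy i).2)

theorem sum_productWeight (y : α → ℝ) : ∑ S, productWeight y S = 1 := by
  simp only [productWeight, compl_eq_univ_sdiff, ← powerset_univ, ← prod_add]
  simp

theorem productWeight_erase_mul (y : α → ℝ) {T : Finset α} {i : α} (hi : i ∈ T) :
    productWeight y (T.erase i) * y i = productWeight y T * (1 - y i) := by
  rw [productWeight, productWeight, compl_erase, prod_insert (by simpa using hi),
    ← prod_erase_mul T y hi]
  ring

theorem sum_Icc_univ_prod_half_mul_prod_compl (y : α → ℝ) (T : Finset α) :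
    ∑ S ∈ Icc T univ, (∏ i ∈ S, y i / 2) * ∏ i ∈ Sᶜ, (1 - y i)
      = productWeight (fun i => y i / 2) T := by
  have hinj : Set.InjOn (T ∪ ·) (Tᶜ.powerset : Set (Finset α)) := by
    intro U hU V hV hUV
    simp only [coe_powerset, Set.mem_preimage, Set.mem_powerset_iff, coe_subset,
      subset_compl_iff_disjoint_left] at hU hV hUV
    rw [← union_sdiff_cancel_left hU, hUV, union_sdiff_cancel_left hV]
  rw [Icc_eq_image_powerset (subset_univ T), ← compl_eq_univ_sdiff, sum_image hinj]
  calc ∑ U ∈ Tᶜ.powerset, (∏ i ∈ T ∪ U, y i / 2) * ∏ i ∈ (T ∪ U)ᶜ, (1 - y i)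
      = ∑ U ∈ Tᶜ.powerset,
          (∏ i ∈ T, y i / 2) * ((∏ i ∈ U, y i / 2) * ∏ i ∈ Tᶜ \ U, (1 - y i)) := by
        refine sum_congr rfl fun U hU => ?_
        rw [prod_union (disjoint_of_subset_right (mem_powerset.1 hU) disjoint_compl_right),
          compl_union, ← sdiff_eq_inter_compl, mul_assoc]
    _ = (∏ i ∈ T, y i / 2) * ∏ i ∈ Tᶜ, (y i / 2 + (1 - y i)) := by rw [← mul_sum, prod_add]
    _ = productWeight (fun i => y i / 2) T := by
        rw [productWeight]
        congr 1
        exact prod_congr rfl fun i _ => by ring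

theorem sum_productWeight_mul_sum_powerset (y : α → ℝ) (h : Finset α → ℝ) :
    ∑ S, productWeight y S * ∑ T ∈ S.powerset, 1 / 2 ^ #S * h T
      = ∑ T, productWeight (fun i => y i / 2) T * h T := by
  have hhalf : ∀ S : Finset α,
      productWeight y S * (1 / 2 ^ #S) = (∏ i ∈ S, y i / 2) * ∏ i ∈ Sᶜ, (1 - y i) := by
    intro S
    rw [productWeight, prod_div_distrib, prod_const]
    ring
  calc ∑ S, productWeight y S * ∑ T ∈ S.powerset, 1 / 2 ^ #S * h T
      = ∑ S, ∑ T ∈ S.powerset, (∏ i ∈ S, y i / 2) * (∏ i ∈ Sᶜ, (1 - y i)) * h T := by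
        simp_rw [mul_sum, ← mul_assoc, hhalf]
    _ = ∑ T, ∑ S ∈ Icc T univ, (∏ i ∈ S, y i / 2) * (∏ i ∈ Sᶜ, (1 - y i)) * h T :=
        sum_comm' fun S T => by simp
    _ = ∑ T, productWeight (fun i => y i / 2) T * h T := by
        simp_rw [← sum_mul, sum_Icc_univ_prod_half_mul_prod_compl]

theorem sum_sum_compl_eq_sum_sum_erase {β : Type*} [AddCommMonoid β] (g : Finset α → α → β) :
    ∑ T, ∑ i ∈ Tᶜ, g T i = ∑ T, ∑ i ∈ T, g (T.erase i) i := by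
  rw [sum_sigma', sum_sigma']
  refine sum_nbij' (fun p => ⟨insert p.2 p.1, p.2⟩) (fun p => ⟨p.1.erase p.2, p.2⟩)
    ?_ ?_ ?_ ?_ ?_ <;> rintro ⟨T, a⟩ hp <;> simp_all

end ProductWeight

namespace Submodular

variable {n : ℕ} {f : Finset (Fin n) → ℝ}

theorem sum_sub_erase_le (hf : Submodular f) {A T : Finset (Fin n)} (hAT : A ⊆ T) :
    ∑ i ∈ A, (f T - f (T.erase i)) ≤ f T - f (T \ A) := by
  induction A using Finset.induction_on with
  | empty => simp
  | @insert a A ha ih =>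
    have haT : a ∈ T := hAT (mem_insert_self a A)
    have hunion : (T \ A) ∪ T.erase a = T := by
      ext t; by_cases t = a <;> simp_all
    have hinter : (T \ A) ∩ T.erase a = T \ insert a A := by
      ext t; simp only [mem_inter, mem_sdiff, mem_erase, mem_insert]; tauto
    have hsub := hf (T \ A) (T.erase a)
    rw [hunion, hinter] at hsub
    rw [sum_insert ha]
    linarith [ih ((subset_insert a A).trans hAT)]

/-- Removing all the elements with a positive decrement at once loses at least the sum of
those decrements, and `f` stays nonnegative. -/
theorem sum_posPart_sub_erase_le (hf : Submodular f) (hnonneg : ∀ S, 0 ≤ f S)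
    (T : Finset (Fin n)) :
    ∑ i ∈ T, (f T - f (T.erase i))⁺ ≤ f T := by
  set A := T.filter fun i => 0 < f T - f (T.erase i)
  have hpos : ∑ i ∈ T, (f T - f (T.erase i))⁺ = ∑ i ∈ A, (f T - f (T.erase i)) := by
    rw [sum_filter]
    refine sum_congr rfl fun i _ => ?_
    split_ifs with h
    · exact posPart_eq_self.2 h.le
    · exact posPart_eq_zero.2 (not_lt.1 h)
  linarith [hf.sum_sub_erase_le (filter_subset _ T : A ⊆ T), hnonneg (T \ A)]

theorem sum_productWeight_mul_sum_compl_posPart_le (hf : Submodular f)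
    (hnonneg : ∀ S, 0 ≤ f S) {y : Fin n → ℝ} (hy : ∀ i, 0 ≤ y i ∧ y i ≤ 1) :
    ∑ T, productWeight y T * ∑ i ∈ Tᶜ, (f (insert i T) - f T)⁺ * y i ≤ multilinear f y := by
  calc ∑ T, productWeight y T * ∑ i ∈ Tᶜ, (f (insert i T) - f T)⁺ * y i
      = ∑ T, ∑ i ∈ T, productWeight y (T.erase i) * y i * (f T - f (T.erase i))⁺ := by
        simp_rw [mul_sum]
        rw [sum_sum_compl_eq_sum_sum_erase]
        refine sum_congr rfl fun T _ => sum_congr rfl fun i hi => ?_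
        rw [insert_erase hi]
        ring
    _ ≤ ∑ T, productWeight y T * ∑ i ∈ T, (f T - f (T.erase i))⁺ := by
        simp_rw [mul_sum]
        refine sum_le_sum fun T _ => sum_le_sum fun i hi => ?_
        rw [productWeight_erase_mul y hi]
        exact mul_le_mul_of_nonneg_right
          (mul_le_of_le_one_right (productWeight_nonneg hy T) (by linarith [(hy i).1]))
          (posPart_nonneg _)
    _ ≤ multilinear f y :=
        sum_le_sum fun T _ =>
          mul_le_mul_of_nonneg_left (hf.sum_posPart_sub_erase_le hnonneg T)
            (productWeight_nonneg hy T)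

end Submodular

theorem multilinear_eq_sum_productWeight {n : ℕ} (f : Finset (Fin n) → ℝ) (y : Fin n → ℝ) :
    multilinear f y = ∑ S, productWeight y S * f S :=
  rfl

theorem multilinear_nonneg {n : ℕ} {f : Finset (Fin n) → ℝ} (hnonneg : ∀ S, 0 ≤ f S)
    {y : Fin n → ℝ} (hy : ∀ i, 0 ≤ y i ∧ y i ≤ 1) : 0 ≤ multilinear f y :=
  sum_nonneg fun S _ => mul_nonneg (productWeight_nonneg hy S) (hnonneg S)

theorem fstarHalf_le_sum_productWeight {n : ℕ} (f : Finset (Fin n) → ℝ) {x : Fin n → ℝ}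
    (hx : ∀ i, 0 ≤ x i ∧ x i ≤ 1) :
    fstarHalf f x ≤ ∑ S, productWeight x S *
      ∑ T ∈ S.powerset, 1 / 2 ^ #S * (f T + ∑ i ∈ Sᶜ, (f (insert i T) - f T) * x i) :=
  inf'_le_sum_mul_of_sum_eq_one _ _ _ (fun S _ => productWeight_nonneg hx S)
    (sum_productWeight x)

theorem sum_compl_mul_le_sum_compl_posPart_mul {n : ℕ} (f : Finset (Fin n) → ℝ)
    {x : Fin n → ℝ} (hx : ∀ i, 0 ≤ x i) {S T : Finset (Fin n)} (hTS : T ⊆ S) :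
    ∑ i ∈ Sᶜ, (f (insert i T) - f T) * x i ≤ ∑ i ∈ Tᶜ, (f (insert i T) - f T)⁺ * x i :=
  calc ∑ i ∈ Sᶜ, (f (insert i T) - f T) * x i
      ≤ ∑ i ∈ Sᶜ, (f (insert i T) - f T)⁺ * x i :=
        sum_le_sum fun i _ => mul_le_mul_of_nonneg_right (le_posPart _) (hx i)
    _ ≤ ∑ i ∈ Tᶜ, (f (insert i T) - f T)⁺ * x i :=
        sum_le_sum_of_subset_of_nonneg (compl_subset_compl.2 hTS)
          fun i _ _ => mul_nonneg (posPart_nonneg _) (hx i)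

theorem fstarHalf_le_three_mul_multilinear {n : ℕ} {f : Finset (Fin n) → ℝ} (hf : Submodular f)
    (hnonneg : ∀ S, 0 ≤ f S) {x : Fin n → ℝ} (hx : ∀ i, 0 ≤ x i ∧ x i ≤ 1) :
    fstarHalf f x ≤ 3 * multilinear f (fun i => x i / 2) := by
  have hhalf : ∀ i, 0 ≤ x i / 2 ∧ x i / 2 ≤ 1 := fun i => by constructor <;> linarith [hx i]
  calc fstarHalf f x
      ≤ ∑ S, productWeight x S *
          ∑ T ∈ S.powerset, 1 / 2 ^ #S * (f T + ∑ i ∈ Sᶜ, (f (insert i T) - f T) * x i) :=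
        fstarHalf_le_sum_productWeight f hx
    _ ≤ ∑ S, productWeight x S *
          ∑ T ∈ S.powerset, 1 / 2 ^ #S * (f T + ∑ i ∈ Tᶜ, (f (insert i T) - f T)⁺ * x i) := by
        refine sum_le_sum fun S _ => mul_le_mul_of_nonneg_left ?_ (productWeight_nonneg hx S)
        refine sum_le_sum fun T hT => mul_le_mul_of_nonneg_left ?_ (by positivity)
        exact add_le_add_right (sum_compl_mul_le_sum_compl_posPart_mul f (fun i => (hx i).1)
          (mem_powerset.1 hT)) _
    _ = ∑ T, productWeight (fun i => x i / 2) T *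
          (f T + ∑ i ∈ Tᶜ, (f (insert i T) - f T)⁺ * x i) :=
        sum_productWeight_mul_sum_powerset x _
    _ = multilinear f (fun i => x i / 2) + 2 * ∑ T, productWeight (fun i => x i / 2) T *
          ∑ i ∈ Tᶜ, (f (insert i T) - f T)⁺ * (x i / 2) := by
        have hdouble : ∀ T : Finset (Fin n), ∑ i ∈ Tᶜ, (f (insert i T) - f T)⁺ * x i
            = 2 * ∑ i ∈ Tᶜ, (f (insert i T) - f T)⁺ * (x i / 2) := fun T => by
          rw [mul_sum]
          exact sum_congr rfl fun i _ => by ring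
        rw [multilinear_eq_sum_productWeight, mul_sum, ← sum_add_distrib]
        exact sum_congr rfl fun T _ => by rw [hdouble]; ring
    _ ≤ 3 * multilinear f (fun i => x i / 2) := by
        linarith [hf.sum_productWeight_mul_sum_compl_posPart_le hnonneg hhalf]

theorem stmt_12 {n : ℕ} (f : Finset (Fin n) → ℝ) (hf : Submodular f)
    (hnonneg : ∀ S, 0 ≤ f S) (x : Fin n → ℝ) (hx : ∀ i, 0 ≤ x i ∧ x i ≤ 1) :
    fstarHalf f x ≤ 50 * multilinear f (fun i => x i / 2) := by
  have hhalf : ∀ i, 0 ≤ x i / 2 ∧ x i / 2 ≤ 1 := fun i => by constructor <;> linarith [hx i]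
  linarith [fstarHalf_le_three_mul_multilinear hf hnonneg hx, multilinear_nonneg hnonneg hhalf]
end

section
/- If f is a non-negative submodular function on subsets of [n] and S_OCRS ⊆ [n] is fixed, and T_ALG is a random subset of S_OCRS such that each element of S_OCRS belongs to T_ALG with probability at least 1/2 (not necessarily independently), then E[f(T_ALG)] ≥ (1/2)·f(S_OCRS). -/
/-!
Induct on `S`, removing an element `e` whose inclusion probability `p = P[e ∈ T]` is smallest.
Submodularity along `T.erase e ⊆ S.erase e` gives `f T ≥ f (T.erase e) + [e ∈ T] (f S - f (S.erase e))`,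
so `E[f T] ≥ E[f (T.erase e)] + p (f S - f (S.erase e))`. The random set `T.erase e ⊆ S.erase e`
still contains every remaining element with probability at least `p`, so by induction
`E[f (T.erase e)] ≥ p f (S.erase e)`, whence `E[f T] ≥ p f S ≥ f S / 2` as `f S ≥ 0`.
-/

open Finset

/-- `P[e ∈ X]` for the random set that equals `X i` with probability `w i`. -/
def marginal {ι : Type*} [Fintype ι] {n : ℕ} (w : ι → ℝ) (X : ι → Finset (Fin n))
    (e : Fin n) : ℝ :=
  ∑ i ∈ univ.filter (fun i => e ∈ X i), w i

section marginal

variable {ι : Type*} [Fintype ι] {n : ℕ} {w : ι → ℝ} {X : ι → Finset (Fin n)}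

theorem marginal_le_one (hw : ∀ i, 0 ≤ w i) (hsum : ∑ i, w i = 1) (e : Fin n) :
    marginal w X e ≤ 1 :=
  hsum ▸ sum_le_sum_of_subset_of_nonneg (filter_subset _ _) fun i _ _ => hw i

theorem marginal_erase_of_ne {e e' : Fin n} (h : e' ≠ e) :
    marginal w (fun i => (X i).erase e) e' = marginal w X e' := by
  simp [marginal, mem_erase, h]

theorem sum_mul_ite_mem (e : Fin n) (a : ℝ) :
    ∑ i, w i * (if e ∈ X i then a else 0) = marginal w X e * a := by
  simp only [mul_ite, mul_zero, ← sum_filter, marginal, sum_mul]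

end marginal

namespace Submodular

variable {n : ℕ} {f : Finset (Fin n) → ℝ}

theorem sub_erase_le (hf : Submodular f) {T S : Finset (Fin n)} (hTS : T ⊆ S) {e : Fin n}
    (he : e ∈ T) : f S - f (S.erase e) ≤ f T - f (T.erase e) := by
  have h := hf T (S.erase e)
  rw [union_erase_of_mem he, union_eq_right.2 hTS, inter_erase, inter_eq_left.2 hTS] at h
  linarith

theorem erase_add_ite_le (hf : Submodular f) {T S : Finset (Fin n)} (hTS : T ⊆ S)
    (e : Fin n) : f (T.erase e) + (if e ∈ T then f S - f (S.erase e) else 0) ≤ f T := by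
  split_ifs with he
  · linarith [hf.sub_erase_le hTS he]
  · simp [erase_eq_of_notMem he]

theorem mul_le_sum_of_le_marginal (hf : Submodular f) (hnonneg : ∀ S, 0 ≤ f S)
    {ι : Type*} [Fintype ι] {w : ι → ℝ} (hw : ∀ i, 0 ≤ w i) (hsum : ∑ i, w i = 1)
    (S : Finset (Fin n)) (X : ι → Finset (Fin n)) (hX : ∀ i, X i ⊆ S) (c : ℝ) (hc : c ≤ 1)
    (hmarg : ∀ e ∈ S, c ≤ marginal w X e) :
    c * f S ≤ ∑ i, w i * f (X i) := by
  induction S using Finset.strongInduction generalizing X c with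
  | H S ih =>
    rcases S.eq_empty_or_nonempty with rfl | hne
    · have hX : ∀ i, X i = ∅ := fun i => subset_empty.1 (hX i)
      simp only [hX, ← sum_mul, hsum, one_mul]
      nlinarith [hnonneg ∅]
    obtain ⟨e, heS, hmin⟩ := S.exists_min_image (marginal w X) hne
    set p := marginal w X e
    have herase : p * f (S.erase e) ≤ ∑ i, w i * f ((X i).erase e) :=
      ih _ (erase_ssubset heS) _ (fun i => erase_subset_erase e (hX i)) p
        (marginal_le_one hw hsum e) fun e' he' => by
          rw [marginal_erase_of_ne (ne_of_mem_erase he')]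
          exact hmin e' (mem_of_mem_erase he')
    have hstep : ∑ i, w i * f ((X i).erase e) + p * (f S - f (S.erase e)) ≤
        ∑ i, w i * f (X i) := by
      rw [← sum_mul_ite_mem, ← sum_add_distrib]
      exact sum_le_sum fun i _ => by
        rw [← mul_add]
        exact mul_le_mul_of_nonneg_left (hf.erase_add_ite_le (hX i) e) (hw i)
    calc c * f S ≤ p * f S := mul_le_mul_of_nonneg_right (hmarg e heS) (hnonneg S)
      _ ≤ ∑ i, w i * f (X i) := by linarith

end Submodular

theorem stmt_17 {n : ℕ} (f : Finset (Fin n) → ℝ) (hf : Submodular f)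
    (hnonneg : ∀ S, 0 ≤ f S) (SOCRS : Finset (Fin n))
    (μ : Finset (Fin n) → ℝ)
    (hμnonneg : ∀ T, 0 ≤ μ T)
    (hsupp : ∀ T, μ T ≠ 0 → T ⊆ SOCRS)
    (hsum : ∑ T : Finset (Fin n), μ T = 1)
    (hmarg : ∀ e ∈ SOCRS,
      (1 / 2 : ℝ) ≤ ∑ T ∈ Finset.univ.filter (fun T => e ∈ T), μ T) :
    (1 / 2 : ℝ) * f SOCRS ≤ ∑ T : Finset (Fin n), μ T * f T := by
  have hrestrict : ∀ T, μ T * f (T ∩ SOCRS) = μ T * f T := fun T => by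
    by_cases hT : μ T = 0
    · simp [hT]
    · rw [inter_eq_left.2 (hsupp T hT)]
  have hmarg' : ∀ e ∈ SOCRS, (1 / 2 : ℝ) ≤ marginal μ (· ∩ SOCRS) e := fun e he => by
    simpa [marginal, mem_inter, he] using hmarg e he
  simpa only [hrestrict] using hf.mul_le_sum_of_le_marginal hnonneg hμnonneg hsum SOCRS
    (· ∩ SOCRS) (fun T => inter_subset_right) (1 / 2) (by norm_num) hmarg'
end
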